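/- arXiv:1707.07105 — 2 statements merged into one kernel-verified Lean document; each statement's English description precedes it below -/
import Mathlib

section
/- Let vmin, vmax be real numbers with 0 < vmin ≤ vmax, let v0 be a nonzero complex number with θ = arg(v0), and let φ = arccos(vmin/vmax). Let i be a nonzero complex number and set δ = |arg(i · conj(v0))|. Then the supremum of the active power Re(v · conj(i)) over v ∈ S_V = {v ∈ ℂ : |v| ≤ vmax and Re(v · conj(v0)) ≥ vmin · |v0|} equals vmax · |i| · cos(max(δ − φ, 0)), and this value is attained by some v ∈ S_V. -/
/-!
Rotating by `v0 / ‖v0‖` reduces to `v0 = 1`, where `S_V` becomes the circular segment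
`{w | ‖w‖ ≤ vmax ∧ vmax * cos φ ≤ w.re}` and the active power is `‖k‖ * Re (w * exp (-β I))` with
`k = i * conj v0 / ‖v0‖` and `β = arg k`. If `|β| ≤ φ` the unconstrained maximiser `vmax * exp (β I)`
lies in the segment. Otherwise the direction `exp (|β| I)` lies in the normal cone at the corner
`vmax * exp (φ I)`, so the corner is optimal; in both cases the maximiser is `vmax * exp (α I)` with
`α` the clamp of `β` to `[-φ, φ]`.
-/

open Real Complex ComplexConjugate

theorem mul_cos_add_mul_sin_le {R x y : ℝ} (hR : 0 ≤ R) (hxy : x ^ 2 + y ^ 2 ≤ R ^ 2) (t : ℝ) :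
    x * Real.cos t + y * Real.sin t ≤ R := by
  nlinarith [sq_nonneg (x * Real.sin t - y * Real.cos t),
    sq_nonneg (x * Real.cos t + y * Real.sin t - R), Real.sin_sq_add_cos_sq t]

theorem mul_cos_add_mul_sin_le_mul_cos_sub {R φ δ x y : ℝ} (hR : 0 ≤ R) (hφ0 : 0 ≤ φ)
    (hφδ : φ ≤ δ) (hδπ : δ ≤ π) (hx : R * Real.cos φ ≤ x) (hxy : x ^ 2 + y ^ 2 ≤ R ^ 2) :
    x * Real.cos δ + y * Real.sin δ ≤ R * Real.cos (δ - φ) := by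
  rcases (sin_nonneg_of_nonneg_of_le_pi hφ0 (hφδ.trans hδπ)).eq_or_lt with hsφ | hsφ
  · -- `φ = 0`, where the segment is `{R}`, or `φ = δ = π`
    have hcos_sub : Real.cos (δ - φ) = Real.cos δ * Real.cos φ := by
      rw [Real.cos_sub, ← hsφ]; ring
    rcases sq_eq_one_iff.1 (by nlinarith [Real.sin_sq_add_cos_sq φ] : Real.cos φ ^ 2 = 1)
      with h | h
    · have hx' : x = R := by nlinarith
      have hy : y = 0 := by nlinarith
      rw [hcos_sub, h, hx', hy]; simp
    · have hcδ : Real.cos δ = -1 :=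
        le_antisymm (h ▸ cos_le_cos_of_nonneg_of_le_pi hφ0 hδπ hφδ) (neg_one_le_cos δ)
      have hsδ : Real.sin δ = 0 := by nlinarith [Real.sin_sq_add_cos_sq δ]
      rw [hcos_sub, h, hcδ, hsδ]; nlinarith
  · refine le_of_mul_le_mul_left ?_ hsφ
    have hsδ : 0 ≤ Real.sin δ := sin_nonneg_of_nonneg_of_le_pi (hφ0.trans hφδ) hδπ
    have hsδφ : 0 ≤ Real.sin (δ - φ) :=
      sin_nonneg_of_nonneg_of_le_pi (sub_nonneg.2 hφδ) (by linarith)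
    -- `sin φ • exp (δ I) = sin δ • exp (φ I) - sin (δ - φ) • 1`: a combination of the outward
    -- normals of the segment at the corner `R * exp (φ I)` with coefficients of the right sign
    calc Real.sin φ * (x * Real.cos δ + y * Real.sin δ)
        = Real.sin δ * (x * Real.cos φ + y * Real.sin φ) - Real.sin (δ - φ) * x := by
          rw [Real.sin_sub]; ring
      _ ≤ Real.sin δ * R - Real.sin (δ - φ) * (R * Real.cos φ) := by
          gcongr
          exact mul_cos_add_mul_sin_le hR hxy φ
      _ = Real.sin φ * (R * Real.cos (δ - φ)) := by
          rw [Real.sin_sub, Real.cos_sub]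
          linear_combination (-R * Real.sin δ) * Real.sin_sq_add_cos_sq φ

theorem mul_cos_add_mul_sin_le_mul_cos_max_abs_sub {R φ β x y : ℝ} (hR : 0 ≤ R) (hφ0 : 0 ≤ φ)
    (hβ : |β| ≤ π) (hx : R * Real.cos φ ≤ x) (hxy : x ^ 2 + y ^ 2 ≤ R ^ 2) :
    x * Real.cos β + y * Real.sin β ≤ R * Real.cos (max (|β| - φ) 0) := by
  wlog hβ0 : 0 ≤ β generalizing β y
  · have := this (y := -y) (β := -β) (by rwa [abs_neg]) (by rwa [neg_sq]) (by linarith)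
    rwa [Real.cos_neg, Real.sin_neg, abs_neg, neg_mul_neg] at this
  rw [abs_of_nonneg hβ0] at hβ ⊢
  rcases le_total β φ with h | h
  · rw [max_eq_right (sub_nonpos.2 h), Real.cos_zero, mul_one]
    exact mul_cos_add_mul_sin_le hR hxy β
  · rw [max_eq_left (sub_nonneg.2 h)]
    exact mul_cos_add_mul_sin_le_mul_cos_sub hR hφ0 h hβ hx hxy

theorem abs_sub_max_neg_min {β φ : ℝ} (hφ : 0 ≤ φ) :
    |β - max (-φ) (min β φ)| = max (|β| - φ) 0 := by
  simp only [abs_eq_max_neg, max_def, min_def]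
  split_ifs <;> linarith

theorem Complex.re_mul_conj_eq_norm_mul (w k : ℂ) :
    (w * conj k).re = ‖k‖ * (w.re * Real.cos (arg k) + w.im * Real.sin (arg k)) := by
  rw [mul_add, mul_left_comm, norm_mul_cos_arg, mul_left_comm, norm_mul_sin_arg]
  simp

/-- The voltage domain `S_V` for `v0 = 1`, written with `vmin = R * cos φ`. -/
def circularSegment (R φ : ℝ) : Set ℂ :=
  {w | ‖w‖ ≤ R ∧ R * Real.cos φ ≤ w.re}

theorem isGreatest_re_mul_conj_circularSegment {R φ : ℝ} (hR : 0 ≤ R) (hφ0 : 0 ≤ φ)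
    (hφπ : φ ≤ π) (k : ℂ) :
    IsGreatest {p | ∃ w ∈ circularSegment R φ, p = (w * conj k).re}
      (R * ‖k‖ * Real.cos (max (|arg k| - φ) 0)) := by
  refine ⟨?_, ?_⟩
  · set α := max (-φ) (min (arg k) φ)
    have hα : |α| ≤ φ := abs_le.2 ⟨le_max_left _ _, max_le (by linarith) (min_le_right _ _)⟩
    refine ⟨R * exp (α * I), ⟨?_, ?_⟩, ?_⟩
    · simp [norm_exp_ofReal_mul_I, abs_of_nonneg hR]
    · rw [re_ofReal_mul, exp_ofReal_mul_I_re, ← Real.cos_abs α]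
      gcongr
      exact cos_le_cos_of_nonneg_of_le_pi (abs_nonneg α) hφπ hα
    · rw [re_mul_conj_eq_norm_mul, re_ofReal_mul, im_ofReal_mul, exp_ofReal_mul_I_re,
        exp_ofReal_mul_I_im, ← abs_sub_max_neg_min hφ0, Real.cos_abs, Real.cos_sub]
      ring
  · rintro p ⟨w, ⟨hw, hre⟩, rfl⟩
    have hsq : w.re ^ 2 + w.im ^ 2 ≤ R ^ 2 := by
      rw [sq, sq, ← normSq_apply, ← Complex.sq_norm]; gcongr
    rw [re_mul_conj_eq_norm_mul, mul_comm R, mul_assoc]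
    gcongr
    exact mul_cos_add_mul_sin_le_mul_cos_max_abs_sub hR hφ0 (abs_arg_le_pi k) hre hsq

theorem setOf_re_mul_conj_eq_of_norm_eq_one {u : ℂ} (hu : ‖u‖ = 1) (S : Set ℂ) (i : ℂ) :
    {p : ℝ | ∃ v ∈ S, p = (v * conj i).re} =
      {p | ∃ w ∈ {w | w * u ∈ S}, p = (w * conj (i * conj u)).re} := by
  have hconj : conj u * u = 1 := by rw [conj_mul', hu]; simp
  ext p
  constructor
  · rintro ⟨v, hv, rfl⟩
    refine ⟨v * conj u, show v * conj u * u ∈ S by rwa [mul_assoc, hconj, mul_one], ?_⟩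
    rw [map_mul, conj_conj, mul_comm (conj i), ← mul_assoc, mul_assoc v, hconj, mul_one]
  · rintro ⟨w, hw, rfl⟩
    exact ⟨w * u, hw, by rw [map_mul, conj_conj]; ring_nf⟩

theorem sup_active_power_over_voltage_domain_general
    (vmin vmax : ℝ) (hmin : 0 < vmin) (hle : vmin ≤ vmax)
    (v0 : ℂ) (hv0 : v0 ≠ 0)
    (φ : ℝ) (hφ : φ = Real.arccos (vmin / vmax))
    (i : ℂ)
    (δ : ℝ) (hδ : δ = |Complex.arg (i * (starRingEnd ℂ) v0)|) :
    IsGreatest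
      {p : ℝ | ∃ v ∈ {v : ℂ | ‖v‖ ≤ vmax ∧
          vmin * ‖v0‖ ≤ (v * (starRingEnd ℂ) v0).re},
        p = (v * (starRingEnd ℂ) i).re}
      (vmax * ‖i‖ * Real.cos (max (δ - φ) 0)) := by
  have hv0' : 0 < ‖v0‖ := norm_pos_iff.2 hv0
  have hvmax : 0 < vmax := hmin.trans_le hle
  have hcosφ : vmax * Real.cos φ = vmin := by
    rw [hφ, cos_arccos (by linarith [div_pos hmin hvmax]) ((div_le_one hvmax).2 hle)]
    field_simp
  set u : ℂ := v0 / (‖v0‖ : ℂ)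
  have hu : ‖u‖ = 1 := by simp [u, hv0'.ne']
  have hk_norm : ‖i * conj u‖ = ‖i‖ := by rw [norm_mul, norm_conj, hu, mul_one]
  have hk_arg : arg (i * conj u) = arg (i * conj v0) := by
    have hconj_u : conj u = conj v0 * ((‖v0‖⁻¹ : ℝ) : ℂ) := by simp [u, div_eq_mul_inv]
    rw [hconj_u, ← mul_assoc, arg_mul_real (inv_pos.2 hv0')]
  have hdomain : {w | w * u ∈ {v : ℂ | ‖v‖ ≤ vmax ∧ vmin * ‖v0‖ ≤ (v * conj v0).re}} =
      circularSegment vmax φ := by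
    have hu_v0 : u * conj v0 = (‖v0‖ : ℂ) := by
      rw [div_mul_eq_mul_div, mul_conj', sq, mul_div_cancel_right₀ _ (by exact_mod_cast hv0'.ne')]
    ext w
    simp only [circularSegment, Set.mem_ofPred_eq, norm_mul, hu, mul_one, mul_assoc, hu_v0,
      re_mul_ofReal, hcosφ, mul_le_mul_iff_left₀ hv0']
  rw [setOf_re_mul_conj_eq_of_norm_eq_one hu, hdomain, hδ, ← hk_arg, ← hk_norm]
  exact isGreatest_re_mul_conj_circularSegment hvmax.le (hφ ▸ arccos_nonneg _)
    (hφ ▸ arccos_le_pi _) _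

/-- The supremum of the active power `Re(v · conj i)` over the convex
voltage feasibility domain equals `vmax · |i| · cos(max(δ - φ, 0))` where
`δ = |arg(i · conj v0)|`, and it is attained. -/
theorem sup_active_power_over_voltage_domain
    (vmin vmax : ℝ) (hmin : 0 < vmin) (hle : vmin ≤ vmax)
    (v0 : ℂ) (hv0 : v0 ≠ 0)
    (θ φ : ℝ) (hθ : θ = Complex.arg v0) (hφ : φ = Real.arccos (vmin / vmax))
    (i : ℂ) (hi : i ≠ 0)
    (δ : ℝ) (hδ : δ = |Complex.arg (i * (starRingEnd ℂ) v0)|) :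
    IsGreatest
      {p : ℝ | ∃ v ∈ {v : ℂ | ‖v‖ ≤ vmax ∧
          vmin * ‖v0‖ ≤ (v * (starRingEnd ℂ) v0).re},
        p = (v * (starRingEnd ℂ) i).re}
      (vmax * ‖i‖ * Real.cos (max (δ - φ) 0)) :=
  sup_active_power_over_voltage_domain_general vmin vmax hmin hle v0 hv0 φ hφ i δ hδ
end

section
/- Let vmin, vmax be real numbers with 0 < vmin ≤ vmax, let v0 be a nonzero complex number with θ = arg(v0), let φ = arccos(vmin/vmax), and let pmax be real. For any complex number i, the robust active-power constraint holds over the full voltage feasibility domain if and only if it holds on the outer arc: (∀ v ∈ S_V, Re(v · conj(i)) ≤ pmax) if and only if (∀ ψ ∈ [θ − φ, θ + φ], vmax·(Re(i)·cos(ψ) + Im(i)·sin(ψ)) ≤ pmax). (Since the constraint is linear in v, it suffices to enforce it at the extreme points of S_V, which lie on the arc of radius vmax.) -/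
/-!
The active power `v ↦ Re (v * conj i)` is `ℝ`-linear, so its sublevel sets are half-planes, and a
bound on it holds on a set iff it holds on the convex hull of that set. The outer arc lies in `S_V`,
and conversely `S_V` lies in the convex hull of the arc: after rotating `v0` onto the positive real
axis, a point `w` of `S_V` lies on the vertical chord of the disc of radius `vmax` through it, whose
endpoints `vmax * exp (± δ * I)` with `δ = arccos (Re w / vmax)` are on the arc since
`Re w ≥ vmin` gives `δ ≤ φ`.
-/

open Complex ComplexConjugate Set

lemma Real.le_cos_of_abs_le_arccos {x t : ℝ} (hx : x ≤ 1) (ht : |t| ≤ Real.arccos x) :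
    x ≤ Real.cos t := by
  have hcos : Real.cos (Real.arccos x) ≤ Real.cos t := by
    rw [← Real.cos_abs t]
    exact Real.cos_le_cos_of_nonneg_of_le_pi (abs_nonneg t) (Real.arccos_le_pi x) ht
  rcases le_or_gt (-1) x with hx' | hx'
  · rwa [Real.cos_arccos hx' hx] at hcos
  · linarith [Real.neg_one_le_cos t]

lemma Complex.rectangle_eq_segment_of_re_eq {z w : ℂ} (h : z.re = w.re) :
    Rectangle z w = segment ℝ z w := by
  rw [rectangle_eq_convexHull, h, re_add_im, ← h, re_add_im, ← convexHull_pair]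
  congr 1
  grind

lemma Complex.mem_segment_ofReal_mul_exp_arccos_of_norm_le {r : ℝ} {w : ℂ} (hr : 0 < r)
    (hw : ‖w‖ ≤ r) :
    w ∈ segment ℝ (r * exp (↑(-Real.arccos (w.re / r)) * I))
      (r * exp (↑(Real.arccos (w.re / r)) * I)) := by
  set δ := Real.arccos (w.re / r)
  have hre : |w.re| ≤ r := (abs_re_le_norm w).trans hw
  have hcos : r * Real.cos δ = w.re := by
    rw [Real.cos_arccos, mul_div_cancel₀ _ hr.ne']
    · rw [le_div_iff₀ hr]; linarith [(abs_le.mp hre).1]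
    · rw [div_le_iff₀ hr]; linarith [(abs_le.mp hre).2]
  have him : |w.im| ≤ r * Real.sin δ := by
    refine abs_le_of_sq_le_sq ?_ (mul_nonneg hr.le
      (Real.sin_nonneg_of_nonneg_of_le_pi (Real.arccos_nonneg _) (Real.arccos_le_pi _)))
    have hsin : (r * Real.sin δ) ^ 2 = r ^ 2 - w.re ^ 2 := by
      rw [← hcos]; linear_combination r ^ 2 * Real.sin_sq_add_cos_sq δ
    rw [hsin, ← sq_norm_sub_sq_re]
    gcongr
  rw [← rectangle_eq_segment_of_re_eq (by simp only [re_ofReal_mul, exp_ofReal_mul_I_re,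
    Real.cos_neg]), Rectangle, mem_reProdIm]
  simp only [re_ofReal_mul, im_ofReal_mul, exp_ofReal_mul_I_re, exp_ofReal_mul_I_im,
    Real.cos_neg, Real.sin_neg, hcos, uIcc_self, mem_singleton_iff, true_and, mul_neg]
  rw [uIcc_of_le (by linarith [abs_nonneg w.im])]
  exact abs_le.mp him

def voltageDomain (vmin vmax : ℝ) (v0 : ℂ) : Set ℂ :=
  {v | ‖v‖ ≤ vmax ∧ vmin * ‖v0‖ ≤ (v * conj v0).re}

def outerArc (r θ φ : ℝ) : Set ℂ :=
  (fun ψ : ℝ => r * exp (ψ * I)) '' Icc (θ - φ) (θ + φ)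

lemma exp_arg_mul_mem_voltageDomain_iff {vmin vmax : ℝ} {v0 : ℂ} (hv0 : v0 ≠ 0) (w : ℂ) :
    exp (arg v0 * I) * w ∈ voltageDomain vmin vmax v0 ↔ ‖w‖ ≤ vmax ∧ vmin ≤ w.re := by
  have hconj : conj v0 = ‖v0‖ * exp (-(arg v0 * I)) := by
    conv_lhs => rw [← norm_mul_exp_arg_mul_I v0]
    rw [map_mul, conj_ofReal, ← exp_conj, map_mul, conj_ofReal, conj_I, mul_neg]
  have hre : (exp (arg v0 * I) * w * conj v0).re = ‖v0‖ * w.re := by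
    rw [hconj, show exp (arg v0 * I) * w * (‖v0‖ * exp (-(arg v0 * I)))
      = ‖v0‖ * w * (exp (arg v0 * I) * exp (-(arg v0 * I))) by ring, ← exp_add, add_neg_cancel,
      exp_zero, mul_one, re_ofReal_mul]
  simp only [voltageDomain, mem_ofPred_eq, norm_mul, norm_exp_ofReal_mul_I, one_mul, hre,
    mul_comm vmin, mul_le_mul_iff_right₀ (norm_pos_iff.mpr hv0)]

lemma outerArc_subset_voltageDomain {vmin vmax : ℝ} {v0 : ℂ} (hr : 0 < vmax) (hle : vmin ≤ vmax)
    (hv0 : v0 ≠ 0) :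
    outerArc vmax (arg v0) (Real.arccos (vmin / vmax)) ⊆ voltageDomain vmin vmax v0 := by
  rintro _ ⟨ψ, hψ, rfl⟩
  dsimp only
  have hrot : (vmax : ℂ) * exp (ψ * I) = exp (arg v0 * I) * (vmax * exp (↑(ψ - arg v0) * I)) := by
    rw [mul_left_comm, ← exp_add]; push_cast; ring_nf
  rw [hrot, exp_arg_mul_mem_voltageDomain_iff hv0, re_ofReal_mul, exp_ofReal_mul_I_re, norm_mul,
    norm_exp_ofReal_mul_I, mul_one, norm_real, Real.norm_of_nonneg hr.le]
  refine ⟨le_rfl, ?_⟩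
  have hcos : vmin / vmax ≤ Real.cos (ψ - arg v0) :=
    Real.le_cos_of_abs_le_arccos ((div_le_one hr).mpr hle)
      (abs_sub_le_iff.mpr ⟨by linarith [hψ.2], by linarith [hψ.1]⟩)
  rwa [div_le_iff₀' hr] at hcos

lemma exp_mul_mem_convexHull_outerArc (θ : ℝ) {r : ℝ} {w : ℂ} (hr : 0 < r) (hw : ‖w‖ ≤ r) :
    exp (θ * I) * w ∈ convexHull ℝ (outerArc r θ (Real.arccos (w.re / r))) := by
  set δ := Real.arccos (w.re / r)
  have hδ : 0 ≤ δ := Real.arccos_nonneg _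
  have hrot (t : ℝ) : exp (θ * I) * (r * exp (t * I)) = r * exp (↑(θ + t) * I) := by
    rw [mul_left_comm, ← exp_add]; push_cast; ring_nf
  obtain ⟨a, b, ha, hb, hab, hw_eq⟩ := mem_segment_ofReal_mul_exp_arccos_of_norm_le hr hw
  have hend (t : ℝ) (ht : |t| ≤ δ) : (r : ℂ) * exp (↑(θ + t) * I) ∈ outerArc r θ δ :=
    ⟨θ + t, ⟨by linarith [neg_abs_le t], by linarith [le_abs_self t]⟩, rfl⟩
  refine segment_subset_convexHull (hend (-δ) (by rw [abs_neg, abs_of_nonneg hδ]))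
    (hend δ (abs_of_nonneg hδ).le) ⟨a, b, ha, hb, hab, ?_⟩
  rw [← hrot, ← hrot, ← hw_eq, mul_add, mul_smul_comm, mul_smul_comm]

lemma voltageDomain_subset_convexHull_outerArc {vmin vmax : ℝ} {v0 : ℂ} (hr : 0 < vmax)
    (hv0 : v0 ≠ 0) :
    voltageDomain vmin vmax v0 ⊆
      convexHull ℝ (outerArc vmax (arg v0) (Real.arccos (vmin / vmax))) := by
  intro v hv
  have hv_eq : exp (arg v0 * I) * (exp (-(arg v0 * I)) * v) = v := by
    rw [← mul_assoc, ← exp_add, add_neg_cancel, exp_zero, one_mul]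
  rw [← hv_eq] at hv ⊢
  obtain ⟨hnorm, hre⟩ := (exp_arg_mul_mem_voltageDomain_iff hv0 _).mp hv
  refine convexHull_mono (image_mono (Icc_subset_Icc ?_ ?_))
    (exp_mul_mem_convexHull_outerArc _ hr hnorm) <;>
  · have := Real.arccos_le_arccos (div_le_div_of_nonneg_right hre hr.le)
    linarith

lemma subset_iff_of_subset_convexHull {E : Type*} [AddCommGroup E] [Module ℝ E] {A S C : Set E}
    (hA : A ⊆ S) (hS : S ⊆ convexHull ℝ A) (hC : Convex ℝ C) : S ⊆ C ↔ A ⊆ C :=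
  ⟨hA.trans, fun h => hS.trans (convexHull_min h hC)⟩

lemma re_ofReal_mul_exp_mul_conj (r ψ : ℝ) (i : ℂ) :
    (r * exp (ψ * I) * conj i).re = r * (i.re * Real.cos ψ + i.im * Real.sin ψ) := by
  rw [mul_assoc, re_ofReal_mul]
  simp only [mul_re, exp_ofReal_mul_I_re, exp_ofReal_mul_I_im, conj_re, conj_im]
  ring

/-- Since the active-power constraint is linear in `v`, enforcing it
over the whole voltage feasibility domain is equivalent to enforcing it on the outer
arc of radius `vmax` with angles in `[θ - φ, θ + φ]`. -/
theorem robust_constraint_iff_on_arc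
    (vmin vmax : ℝ) (hmin : 0 < vmin) (hle : vmin ≤ vmax)
    (v0 : ℂ) (hv0 : v0 ≠ 0)
    (θ φ : ℝ) (hθ : θ = Complex.arg v0) (hφ : φ = Real.arccos (vmin / vmax))
    (pmax : ℝ) (i : ℂ) :
    (∀ v ∈ {v : ℂ | ‖v‖ ≤ vmax ∧
        vmin * ‖v0‖ ≤ (v * (starRingEnd ℂ) v0).re},
      (v * (starRingEnd ℂ) i).re ≤ pmax)
    ↔ (∀ ψ ∈ Set.Icc (θ - φ) (θ + φ),
        vmax * (i.re * Real.cos ψ + i.im * Real.sin ψ) ≤ pmax) := by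
  subst hθ hφ
  have hr : 0 < vmax := hmin.trans_le hle
  have hC : Convex ℝ {v : ℂ | (v * conj i).re ≤ pmax} :=
    convex_halfSpace_le ⟨fun x y => by simp [add_mul], fun c x => by simp [mul_assoc]⟩ pmax
  have key := subset_iff_of_subset_convexHull (outerArc_subset_voltageDomain hr hle hv0)
    (voltageDomain_subset_convexHull_outerArc hr hv0) hC
  rw [outerArc, image_subset_iff] at key
  simpa only [voltageDomain, subset_def, mem_preimage, mem_ofPred_eq,
    re_ofReal_mul_exp_mul_conj] using key
end
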